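/- arXiv:2412.11287 — 2 statements merged into one kernel-verified Lean document; each statement's English description precedes it below -/
import Mathlib

section
/- Let T ⊆ X_0 be a generalised nice set such that both T - X and T ∩ X are non-empty. Then the following are equivalent: (i) T - X is not a generalised nice set; (ii) there exist distinct i,j ∈ I with ⟨P_{i,j,i}⟩ ⊆ T; (iii) there exist distinct i,j ∈ I with {i,i} ∈ T and {0,j} ∈ T; (iv) T ∩ X is not a generalised nice set. -/
/-- The seven lines of the Fano plane. -/
def fanoLines : List (List ℕ) := [[1,2,5],[5,6,7],[7,4,1],[1,3,6],[6,4,2],[2,7,3],[3,4,5]]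

/-- The Fano operation `*` extended to `I₀ = {0,…,7}`: `0*i = i*0 = i`, `i*i = 0`,
and for distinct `i, j ∈ I` it is the third point on the line through `i` and `j`. -/
def fstar (i j : ℕ) : ℕ :=
  if i = j then 0
  else if i = 0 then j
  else if j = 0 then i
  else
    match fanoLines.find? (fun l => l.contains i && l.contains j) with
    | some l => (l.filter (fun x => x != i && x != j)).headD 0
    | none => 0

/-- The points of the Fano plane. -/
def I : Set ℕ := {1,2,3,4,5,6,7}

/-- The extended point set `I₀ = I ∪ {0}`. -/
def I0 : Set ℕ := {0,1,2,3,4,5,6,7}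

/-- `X₀`: unordered pairs from `I₀` (repetitions allowed). -/
def X0 : Set (Sym2 ℕ) := {z | ∃ i ∈ I0, ∃ j ∈ I0, z = s(i,j)}

/-- `X`: unordered pairs of two distinct points of `I`. -/
def X : Set (Sym2 ℕ) := {z | ∃ i ∈ I, ∃ j ∈ I, i ≠ j ∧ z = s(i,j)}

/-- `X_F = {{0,i} : i ∈ I₀}`. -/
def XF : Set (Sym2 ℕ) := {z | ∃ i ∈ I0, z = s(0,i)}

/-- `P_{a,b,c}`. -/
def P (a b c : ℕ) : Set (Sym2 ℕ) :=
  {s(a,b), s(b,c), s(c,a), s(a, fstar b c), s(b, fstar c a), s(c, fstar a b)}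

/-- A generalised nice set: a subset of `X₀` such that `{a,b},{a*b,c} ∈ T` implies
`P_{a,b,c} ⊆ T` for all `a, b, c ∈ I₀`. -/
def IsGNS (T : Set (Sym2 ℕ)) : Prop :=
  T ⊆ X0 ∧ ∀ a ∈ I0, ∀ b ∈ I0, ∀ c ∈ I0,
    s(a,b) ∈ T → s(fstar a b, c) ∈ T → P a b c ⊆ T

/-- A nice set: a subset of `X` such that for all generative `i, j, k ∈ I`,
`{i,j},{i*j,k} ∈ T` implies `P_{i,j,k} ⊆ T`. -/
def IsNice (T : Set (Sym2 ℕ)) : Prop :=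
  T ⊆ X ∧ ∀ i ∈ I, ∀ j ∈ I, ∀ k ∈ I, i ≠ j → i ≠ k → j ≠ k → k ≠ fstar i j →
    s(i,j) ∈ T → s(fstar i j, k) ∈ T → P i j k ⊆ T

/-- The smallest generalised nice set containing `S`. -/
def gnsClosure (S : Set (Sym2 ℕ)) : Set (Sym2 ℕ) := ⋂₀ {T | IsGNS T ∧ S ⊆ T}

/-- A collineation of the Fano plane, realised as a permutation of `ℕ` fixing the
complement of `I` and preserving collinearity. -/
def IsColl (σ : Equiv.Perm ℕ) : Prop :=
  (∀ n, n ∉ I → σ n = n) ∧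
  ∀ i ∈ I, ∀ j ∈ I, i ≠ j → σ (fstar i j) = fstar (σ i) (σ j)

lemma mem_I_iff {a : ℕ} : a ∈ I ↔ a = 1 ∨ a = 2 ∨ a = 3 ∨ a = 4 ∨ a = 5 ∨ a = 6 ∨ a = 7 := by simp [I]
lemma mem_I0_iff {a : ℕ} : a ∈ I0 ↔ a = 0 ∨ a ∈ I := by
  constructor
  · intro h; simp only [I0, Set.mem_insert_iff, Set.mem_singleton_iff] at h
    rw [mem_I_iff]; tauto
  · intro h; rw [mem_I_iff] at h; simp only [I0, Set.mem_insert_iff, Set.mem_singleton_iff]; tauto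
lemma zero_not_mem_I : (0:ℕ) ∉ I := by simp [I]
lemma I_sub_I0 {a : ℕ} (h : a ∈ I) : a ∈ I0 := mem_I0_iff.2 (Or.inr h)
lemma fstar_self (a : ℕ) : fstar a a = 0 := by simp [fstar]
lemma fstar_zero (a : ℕ) : fstar a 0 = a := by
  rcases eq_or_ne a 0 with rfl|h <;> simp [fstar, *]
lemma zero_fstar (a : ℕ) : fstar 0 a = a := by
  rcases eq_or_ne a 0 with rfl|h
  · simp [fstar]
  · simp [fstar, h, Ne.symm h]
lemma sym2_mem_X_iff {a b : ℕ} : s(a,b) ∈ X ↔ (a ∈ I ∧ b ∈ I ∧ a ≠ b) := by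
  constructor
  · rintro ⟨i,hi,j,hj,hij,h⟩
    rw [Sym2.eq_iff] at h
    rcases h with ⟨rfl,rfl⟩|⟨rfl,rfl⟩
    · exact ⟨hi, hj, hij⟩
    · exact ⟨hj, hi, hij.symm⟩
  · rintro ⟨ha,hb,hab⟩; exact ⟨a,ha,b,hb,hab,rfl⟩
lemma X_sub_X0 : X ⊆ X0 := by
  rintro z ⟨i,hi,j,hj,_,rfl⟩; exact ⟨i, I_sub_I0 hi, j, I_sub_I0 hj, rfl⟩
lemma diag_not_mem_X (a : ℕ) : s(a,a) ∉ X := fun h => (sym2_mem_X_iff.1 h).2.2 rfl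
lemma zero_pair_not_mem_X (a : ℕ) : s(0,a) ∉ X := fun h => zero_not_mem_I (sym2_mem_X_iff.1 h).1
lemma pair_zero_not_mem_X (a : ℕ) : s(a,0) ∉ X := fun h => zero_not_mem_I (sym2_mem_X_iff.1 h).2.1
lemma fstar_facts : ∀ a ∈ I, ∀ b ∈ I, a ≠ b →
    (fstar a b ∈ I ∧ fstar a b ≠ a ∧ fstar a b ≠ b ∧ fstar a (fstar a b) = b ∧
     fstar b (fstar a b) = a ∧ fstar (fstar a b) a = b ∧ fstar (fstar a b) b = a) := by
  intro a ha b hb hab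
  rw [mem_I_iff] at ha hb
  rw [mem_I_iff]
  revert hab
  rcases ha with rfl|rfl|rfl|rfl|rfl|rfl|rfl <;> rcases hb with rfl|rfl|rfl|rfl|rfl|rfl|rfl <;> decide

lemma subset_gnsClosure {S : Set (Sym2 ℕ)} : S ⊆ gnsClosure S := by
  intro z hz
  rw [gnsClosure, Set.mem_sInter]
  exact fun U hU => hU.2 hz

lemma gnsClosure_min {S T : Set (Sym2 ℕ)} (h : IsGNS T) (hS : S ⊆ T) : gnsClosure S ⊆ T :=
  fun z hz => (Set.mem_sInter.1 hz) T ⟨h, hS⟩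

-- From C : s(i,i) ∈ T, s(0,j) ∈ T, i ≠ j ∈ I, derive key memberships
lemma key_derive {T : Set (Sym2 ℕ)} (hT : IsGNS T) {i j : ℕ} (hi : i ∈ I) (hj : j ∈ I)
    (hij : i ≠ j) (hii : s(i,i) ∈ T) (h0j : s(0,j) ∈ T) :
    P i i j ⊆ T := by
  apply hT.2 i (I_sub_I0 hi) i (I_sub_I0 hi) j (I_sub_I0 hj) hii
  rw [fstar_self]; exact h0j

lemma mem_P_1 (a b c : ℕ) : s(a,b) ∈ P a b c := by simp [P]
lemma mem_P_2 (a b c : ℕ) : s(b,c) ∈ P a b c := by simp [P]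
lemma mem_P_3 (a b c : ℕ) : s(c,a) ∈ P a b c := by simp [P]
lemma mem_P_4 (a b c : ℕ) : s(a, fstar b c) ∈ P a b c := by simp [P]
lemma mem_P_5 (a b c : ℕ) : s(b, fstar c a) ∈ P a b c := by simp [P]
lemma mem_P_6 (a b c : ℕ) : s(c, fstar a b) ∈ P a b c := by simp [P]

-- L1 : C → ¬ IsGNS (T \ X)
lemma L1 {T : Set (Sym2 ℕ)} (hT : IsGNS T) {i j : ℕ} (hi : i ∈ I) (hj : j ∈ I)
    (hij : i ≠ j) (hii : s(i,i) ∈ T) (h0j : s(0,j) ∈ T) : ¬ IsGNS (T \ X) := by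
  intro ⟨_, hrule⟩
  have h1 : s(i,i) ∈ T \ X := ⟨hii, diag_not_mem_X i⟩
  have h2 : s(fstar i i, j) ∈ T \ X := by
    rw [fstar_self]; exact ⟨h0j, zero_pair_not_mem_X j⟩
  have hP := hrule i (I_sub_I0 hi) i (I_sub_I0 hi) j (I_sub_I0 hj) h1 h2
  have := hP (mem_P_2 i i j)
  exact this.2 (sym2_mem_X_iff.2 ⟨hi, hj, hij⟩)

-- L3 : C → ¬ IsGNS (T ∩ X)
lemma L3 {T : Set (Sym2 ℕ)} (hT : IsGNS T) {i j : ℕ} (hi : i ∈ I) (hj : j ∈ I)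
    (hij : i ≠ j) (hii : s(i,i) ∈ T) (h0j : s(0,j) ∈ T) : ¬ IsGNS (T ∩ X) := by
  intro ⟨_, hrule⟩
  have hK := key_derive hT hi hj hij hii h0j
  obtain ⟨hfI, hfi, hfj, -, -, -, -⟩ := fstar_facts i hi j hj hij
  have h1 : s(i,j) ∈ T ∩ X := ⟨hK (mem_P_2 i i j), sym2_mem_X_iff.2 ⟨hi, hj, hij⟩⟩
  have h2 : s(fstar i j, i) ∈ T ∩ X := by
    refine ⟨?_, sym2_mem_X_iff.2 ⟨hfI, hi, hfi⟩⟩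
    rw [Sym2.eq_swap]
    exact hK (mem_P_4 i i j)
  have hP := hrule i (I_sub_I0 hi) j (I_sub_I0 hj) i (I_sub_I0 hi) h1 h2
  exact diag_not_mem_X i (hP (mem_P_3 i j i)).2

-- L5 : C → closure (P i j i) ⊆ T
lemma L5 {T : Set (Sym2 ℕ)} (hT : IsGNS T) {i j : ℕ} (hi : i ∈ I) (hj : j ∈ I)
    (hij : i ≠ j) (hii : s(i,i) ∈ T) (h0j : s(0,j) ∈ T) : gnsClosure (P i j i) ⊆ T := by
  have hK := key_derive hT hi hj hij hii h0j
  apply gnsClosure_min hT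
  intro z hz
  simp only [P, Set.mem_insert_iff, Set.mem_singleton_iff] at hz
  rcases hz with rfl|rfl|rfl|rfl|rfl|rfl
  · exact hK (mem_P_2 i i j)
  · rw [Sym2.eq_swap]; exact hK (mem_P_2 i i j)
  · exact hii
  · exact hK (mem_P_5 i i j)
  · rw [fstar_self]; rw [Sym2.eq_swap]; exact h0j
  · exact hK (mem_P_4 i i j)

lemma L2_case1 {T : Set (Sym2 ℕ)}
    (hC : ∀ i ∈ I, ∀ j ∈ I, i ≠ j → s(i,i) ∈ T → s(0,j) ∉ T)
    {a c : ℕ} (hc : c ∈ I0) (haa : s(a,a) ∈ T) (h0c : s(0,c) ∈ T) :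
    ∀ z ∈ P a a c, z ∉ X := by
  intro z hz hzX
  simp only [P, Set.mem_insert_iff, Set.mem_singleton_iff] at hz
  rcases hz with rfl|rfl|rfl|rfl|rfl|rfl
  · exact diag_not_mem_X a hzX
  · obtain ⟨haI, hcI, hac⟩ := sym2_mem_X_iff.1 hzX
    exact hC a haI c hcI hac haa h0c
  · obtain ⟨hcI, haI, hca⟩ := sym2_mem_X_iff.1 hzX
    exact hC a haI c hcI (Ne.symm hca) haa h0c
  · obtain ⟨haI, hfI, hne⟩ := sym2_mem_X_iff.1 hzX
    rcases mem_I0_iff.1 hc with rfl|hcI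
    · rw [fstar_zero] at hne; exact hne rfl
    · rcases eq_or_ne c a with rfl|hca
      · rw [fstar_self] at hfI; exact zero_not_mem_I hfI
      · exact hC a haI c hcI (Ne.symm hca) haa h0c
  · obtain ⟨haI, hfI, hne⟩ := sym2_mem_X_iff.1 hzX
    rcases mem_I0_iff.1 hc with rfl|hcI
    · rw [zero_fstar] at hne; exact hne rfl
    · rcases eq_or_ne c a with rfl|hca
      · rw [fstar_self] at hfI; exact zero_not_mem_I hfI
      · exact hC a haI c hcI (Ne.symm hca) haa h0c
  · obtain ⟨-, hfI, -⟩ := sym2_mem_X_iff.1 hzX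
    rw [fstar_self] at hfI; exact zero_not_mem_I hfI

lemma P_zb0_notX (b : ℕ) : ∀ z ∈ P 0 b 0, z ∉ X := by
  intro z hz
  simp only [P, fstar_zero, zero_fstar, fstar_self, Set.mem_insert_iff,
    Set.mem_singleton_iff] at hz
  rcases hz with rfl|rfl|rfl|rfl|rfl|rfl <;>
    first
      | exact zero_pair_not_mem_X _
      | exact pair_zero_not_mem_X _
      | exact diag_not_mem_X _

lemma P_zbb_notX (b : ℕ) : ∀ z ∈ P 0 b b, z ∉ X := by
  intro z hz
  simp only [P, fstar_zero, zero_fstar, fstar_self, Set.mem_insert_iff,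
    Set.mem_singleton_iff] at hz
  rcases hz with rfl|rfl|rfl|rfl|rfl|rfl <;>
    first
      | exact zero_pair_not_mem_X _
      | exact pair_zero_not_mem_X _
      | exact diag_not_mem_X _

lemma P_a0a_notX (a : ℕ) : ∀ z ∈ P a 0 a, z ∉ X := by
  intro z hz
  simp only [P, fstar_zero, zero_fstar, fstar_self, Set.mem_insert_iff,
    Set.mem_singleton_iff] at hz
  rcases hz with rfl|rfl|rfl|rfl|rfl|rfl <;>
    first
      | exact zero_pair_not_mem_X _
      | exact pair_zero_not_mem_X _
      | exact diag_not_mem_X _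

lemma P_a00_notX (a : ℕ) : ∀ z ∈ P a 0 0, z ∉ X := by
  intro z hz
  simp only [P, fstar_zero, zero_fstar, fstar_self, Set.mem_insert_iff,
    Set.mem_singleton_iff] at hz
  rcases hz with rfl|rfl|rfl|rfl|rfl|rfl <;>
    first
      | exact zero_pair_not_mem_X _
      | exact pair_zero_not_mem_X _
      | exact diag_not_mem_X _

-- L2 : ¬C → IsGNS (T \ X)
lemma L2 {T : Set (Sym2 ℕ)} (hT : IsGNS T)
    (hC : ∀ i ∈ I, ∀ j ∈ I, i ≠ j → s(i,i) ∈ T → s(0,j) ∉ T) :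
    IsGNS (T \ X) := by
  refine ⟨fun z hz => hT.1 hz.1, ?_⟩
  intro a ha b hb c hc hab habc
  obtain ⟨hab1, hab2⟩ := hab
  obtain ⟨habc1, habc2⟩ := habc
  have hPT : P a b c ⊆ T := hT.2 a ha b hb c hc hab1 habc1
  have hnotX : ∀ z ∈ P a b c, z ∉ X := by
    have hcase : a = b ∨ a = 0 ∨ b = 0 := by
      by_contra h
      push_neg at h
      obtain ⟨h1, h2, h3⟩ := h
      exact hab2 (sym2_mem_X_iff.2
        ⟨(mem_I0_iff.1 ha).resolve_left h2, (mem_I0_iff.1 hb).resolve_left h3, h1⟩)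
    rcases hcase with h|h|h
    · subst h
      rw [fstar_self] at habc1
      exact L2_case1 hC hc hab1 habc1
    · subst h
      rw [zero_fstar] at habc1 habc2
      rcases eq_or_ne b 0 with rfl|hb0
      · exact L2_case1 hC hc hab1 habc1
      · have hbI : b ∈ I := (mem_I0_iff.1 hb).resolve_left hb0
        have : c = 0 ∨ c = b := by
          by_contra hcon
          push_neg at hcon
          exact habc2 (sym2_mem_X_iff.2
            ⟨hbI, (mem_I0_iff.1 hc).resolve_left hcon.1, Ne.symm hcon.2⟩)
        rcases this with rfl|rfl
        · exact P_zb0_notX _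
        · exact P_zbb_notX _
    · subst h
      rw [fstar_zero] at habc1 habc2
      rcases eq_or_ne a 0 with rfl|ha0
      · exact L2_case1 hC hc hab1 habc1
      · have haI : a ∈ I := (mem_I0_iff.1 ha).resolve_left ha0
        have : c = 0 ∨ c = a := by
          by_contra hcon
          push_neg at hcon
          exact habc2 (sym2_mem_X_iff.2
            ⟨haI, (mem_I0_iff.1 hc).resolve_left hcon.1, Ne.symm hcon.2⟩)
        rcases this with rfl|rfl
        · exact P_a00_notX _
        · exact P_a0a_notX _
  exact fun z hz => ⟨hPT hz, hnotX z hz⟩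

-- L4 : ¬C → IsGNS (T ∩ X)
lemma L4 {T : Set (Sym2 ℕ)} (hT : IsGNS T)
    (hC : ∀ i ∈ I, ∀ j ∈ I, i ≠ j → s(i,i) ∈ T → s(0,j) ∉ T) :
    IsGNS (T ∩ X) := by
  refine ⟨fun z hz => X_sub_X0 hz.2, ?_⟩
  intro a ha0 b hb0 c hc0 h1 h2
  obtain ⟨h1T, h1X⟩ := h1
  obtain ⟨h2T, h2X⟩ := h2
  obtain ⟨haI, hbI, hab⟩ := sym2_mem_X_iff.1 h1X
  obtain ⟨hfI', hcI, hfc⟩ := sym2_mem_X_iff.1 h2X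
  have hPT : P a b c ⊆ T := hT.2 a ha0 b hb0 c hc0 h1T h2T
  obtain ⟨hfI, hfa, hfb, hiif, -, hffa, hffb⟩ := fstar_facts a haI b hbI hab
  have hbc : b ≠ c := by
    rintro rfl
    have e1 : s(b,b) ∈ T := hPT (mem_P_2 a b b)
    have e2 : s(a, fstar b b) ∈ T := hPT (mem_P_4 a b b)
    rw [fstar_self, Sym2.eq_swap] at e2
    exact hC b hbI a haI (Ne.symm hab) e1 e2
  have hca : c ≠ a := by
    rintro rfl
    have e1 : s(c,c) ∈ T := hPT (mem_P_3 c b c)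
    have e2 : s(b, fstar c c) ∈ T := hPT (mem_P_5 c b c)
    rw [fstar_self, Sym2.eq_swap] at e2
    exact hC c haI b hbI hab e1 e2
  obtain ⟨hbcI, -, -, -, -, hffbc, -⟩ := fstar_facts b hbI c hcI hbc
  obtain ⟨hcaI, -, -, -, hfcca, -, -⟩ := fstar_facts c hcI a haI hca
  have hafbc : a ≠ fstar b c := by
    intro h
    apply hfc
    rw [h]
    exact hffbc
  have hbfca : b ≠ fstar c a := by
    intro h
    apply hfc
    rw [h]
    exact hfcca
  intro z hz
  refine ⟨hPT hz, ?_⟩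
  simp only [P, Set.mem_insert_iff, Set.mem_singleton_iff] at hz
  rcases hz with rfl|rfl|rfl|rfl|rfl|rfl
  · exact sym2_mem_X_iff.2 ⟨haI, hbI, hab⟩
  · exact sym2_mem_X_iff.2 ⟨hbI, hcI, hbc⟩
  · exact sym2_mem_X_iff.2 ⟨hcI, haI, hca⟩
  · exact sym2_mem_X_iff.2 ⟨haI, hbcI, hafbc⟩
  · exact sym2_mem_X_iff.2 ⟨hbI, hcaI, hbfca⟩
  · exact sym2_mem_X_iff.2 ⟨hcI, hfI, Ne.symm hfc⟩

theorem charTintXnotgns (T : Set (Sym2 ℕ)) (hT : IsGNS T)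
    (h1 : (T \ X).Nonempty) (h2 : (T ∩ X).Nonempty) :
    (¬ IsGNS (T \ X) ↔ ∃ i ∈ I, ∃ j ∈ I, i ≠ j ∧ gnsClosure (P i j i) ⊆ T) ∧
    (¬ IsGNS (T \ X) ↔ ∃ i ∈ I, ∃ j ∈ I, i ≠ j ∧ s(i,i) ∈ T ∧ s(0,j) ∈ T) ∧
    (¬ IsGNS (T \ X) ↔ ¬ IsGNS (T ∩ X)) := by
  have hiC : ¬ IsGNS (T \ X) ↔ ∃ i ∈ I, ∃ j ∈ I, i ≠ j ∧ s(i,i) ∈ T ∧ s(0,j) ∈ T := by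
    constructor
    · intro hn
      by_contra hc
      exact hn (L2 hT (fun i hi j hj hij hii h0j => hc ⟨i, hi, j, hj, hij, hii, h0j⟩))
    · rintro ⟨i, hi, j, hj, hij, hii, h0j⟩
      exact L1 hT hi hj hij hii h0j
  have hivC : ¬ IsGNS (T ∩ X) ↔ ∃ i ∈ I, ∃ j ∈ I, i ≠ j ∧ s(i,i) ∈ T ∧ s(0,j) ∈ T := by
    constructor
    · intro hn
      by_contra hc
      exact hn (L4 hT (fun i hi j hj hij hii h0j => hc ⟨i, hi, j, hj, hij, hii, h0j⟩))
    · rintro ⟨i, hi, j, hj, hij, hii, h0j⟩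
      exact L3 hT hi hj hij hii h0j
  have hiiC : (∃ i ∈ I, ∃ j ∈ I, i ≠ j ∧ gnsClosure (P i j i) ⊆ T) ↔
      ∃ i ∈ I, ∃ j ∈ I, i ≠ j ∧ s(i,i) ∈ T ∧ s(0,j) ∈ T := by
    constructor
    · rintro ⟨i, hi, j, hj, hij, hcl⟩
      have hP : P i j i ⊆ T := subset_gnsClosure.trans hcl
      refine ⟨i, hi, j, hj, hij, hP (mem_P_3 i j i), ?_⟩
      have := hP (mem_P_5 i j i)
      rwa [fstar_self, Sym2.eq_swap] at this
    · rintro ⟨i, hi, j, hj, hij, hii, h0j⟩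
      exact ⟨i, hi, j, hj, hij, L5 hT hi hj hij hii h0j⟩
  exact ⟨hiC.trans hiiC.symm, hiC, hiC.trans hivC.symm⟩
end

section
/- Let S ⊆ X be a non-empty generalised nice set and J ⊆ I. Then S ∪ {{j,j} : j ∈ J} is a generalised nice set if and only if no j ∈ J equals a*b for some {a,b} ∈ S (i.e. J ∩ J_S = ∅ where J_S = {a*b : {a,b} ∈ S}). -/
lemma I_sub_I0_s15 : I ⊆ I0 := by
  intro x hx
  simp only [I, Set.mem_insert_iff, Set.mem_singleton_iff] at hx
  simp only [I0, Set.mem_insert_iff, Set.mem_singleton_iff]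
  tauto

lemma mem_of_mem_X {x y : ℕ} (h : s(x,y) ∈ X) : x ∈ I ∧ y ∈ I ∧ x ≠ y := by
  obtain ⟨i, hi, j, hj, hij, heq⟩ := h
  rw [Sym2.eq_iff] at heq
  rcases heq with ⟨rfl, rfl⟩ | ⟨rfl, rfl⟩
  exacts [⟨hi, hj, hij⟩, ⟨hj, hi, hij.symm⟩]

lemma fano_inv : ∀ a ∈ I, ∀ b ∈ I, a ≠ b → fstar b (fstar a b) = a := by
  intro a ha b hb
  simp only [I, Set.mem_insert_iff, Set.mem_singleton_iff] at ha hb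
  rcases ha with rfl|rfl|rfl|rfl|rfl|rfl|rfl <;>
    rcases hb with rfl|rfl|rfl|rfl|rfl|rfl|rfl <;> decide

theorem gns_union_diags_iff (S : Set (Sym2 ℕ)) (hSX : S ⊆ X) (hS : IsGNS S)
    (hne : S.Nonempty) (J : Set ℕ) (hJ : J ⊆ I) :
    IsGNS (S ∪ {z | ∃ j ∈ J, z = s(j,j)}) ↔
      ∀ j ∈ J, ¬ ∃ a b : ℕ, s(a,b) ∈ S ∧ fstar a b = j := by
  constructor
  · rintro hT j hjJ ⟨a, b, habS, hab⟩
    have hj : j ∈ I := hJ hjJ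
    obtain ⟨haI, hbI, hne'⟩ := mem_of_mem_X (hSX habS)
    have h1 : s(a,b) ∈ S ∪ {z | ∃ j ∈ J, z = s(j,j)} := Or.inl habS
    have h2 : s(fstar a b, j) ∈ S ∪ {z | ∃ j ∈ J, z = s(j,j)} := by
      rw [hab]; exact Or.inr ⟨j, hjJ, rfl⟩
    have hP := hT.2 a (I_sub_I0_s15 haI) b (I_sub_I0_s15 hbI) j (I_sub_I0_s15 hj) h1 h2
    have hbj : s(b, j) ∈ S ∪ {z | ∃ j ∈ J, z = s(j,j)} := hP (by simp [P])
    have h2' : s(fstar b j, b) ∈ S ∪ {z | ∃ j ∈ J, z = s(j,j)} := by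
      rw [← hab, fano_inv a haI b hbI hne']; exact Or.inl habS
    have hP2 := hT.2 b (I_sub_I0_s15 hbI) j (I_sub_I0_s15 hj) b (I_sub_I0_s15 hbI) hbj h2'
    have hj0 : s(j, fstar b b) ∈ S ∪ {z | ∃ j ∈ J, z = s(j,j)} := hP2 (by simp [P])
    rw [show fstar b b = 0 from by simp [fstar]] at hj0
    rcases hj0 with h | ⟨k, hk, heq⟩
    · exact zero_not_mem_I (mem_of_mem_X (hSX h)).2.1
    · rw [Sym2.eq_iff] at heq
      rcases heq with ⟨_, h0⟩ | ⟨_, h0⟩ <;> exact zero_not_mem_I (h0 ▸ hJ hk)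
  · intro h
    refine ⟨?_, ?_⟩
    · rintro z (hz | ⟨j, hjJ, rfl⟩)
      · exact hS.1 hz
      · exact ⟨j, I_sub_I0_s15 (hJ hjJ), j, I_sub_I0_s15 (hJ hjJ), rfl⟩
    · rintro a ha b hb c hc (h1 | ⟨j, hjJ, heq1⟩) h2
      · rcases h2 with h2 | ⟨k, hkJ, heq2⟩
        · exact fun z hz => Or.inl (hS.2 a ha b hb c hc h1 h2 hz)
        · rw [Sym2.eq_iff] at heq2
          exact absurd ⟨a, b, h1, by rcases heq2 with ⟨h3, _⟩ | ⟨h3, _⟩ <;> exact h3⟩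
            (h k hkJ)
      · exfalso
        rw [Sym2.eq_iff] at heq1
        obtain ⟨ha1, hb1⟩ : a = j ∧ b = j := by tauto
        rw [show fstar a b = 0 from by rw [ha1, hb1]; simp [fstar]] at h2
        rcases h2 with h2 | ⟨k, hkJ, heq2⟩
        · exact zero_not_mem_I (mem_of_mem_X (hSX h2)).1
        · rw [Sym2.eq_iff] at heq2
          rcases heq2 with ⟨h3, _⟩ | ⟨h3, _⟩ <;>
            exact zero_not_mem_I (h3 ▸ hJ hkJ)
end
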